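/- arXiv:0707.3848 — 4 statements merged into one kernel-verified Lean document; each statement's English description precedes it below -/
import Mathlib

section
/- In the generalized ferromagnetic Potts model with multi-spin interactions, if R is a multiset of vertices in which every vertex occurs an even number of times, then the Gibbs expectation ⟨σ^R⟩ = ⟨∏_{i∈R} σᵢ'⟩ is nonnegative. -/
theorem Multiset.prod_map_nonneg_of_forall_even_count {α R : Type*} [DecidableEq α] [CommRing R]
    [LinearOrder R] [IsStrictOrderedRing R] (s : Multiset α) (f : α → R)
    (hs : ∀ a, Even (s.count a)) : 0 ≤ (s.map f).prod := by
  rw [Finset.prod_multiset_map_count]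
  exact Finset.prod_nonneg fun a _ => (hs a).pow_nonneg _

theorem potts_even_multiset_expectation_nonneg_general (n q : ℕ)
    (c : Fin q → ℝ)
    (H : (Fin n → Fin q) → ℝ)
    (Z : ℝ) (hZ : Z = ∑ γ : Fin n → Fin q, Real.exp (-H γ))
    (P : (Fin n → Fin q) → ℝ) (hP : ∀ γ, P γ = Z⁻¹ * Real.exp (-H γ))
    (R : Multiset (Fin n)) (hR : ∀ i, Even (R.count i)) :
    0 ≤ ∑ γ : Fin n → Fin q, (R.map fun i => c (γ i)).prod * P γ := by
  have hZ_nonneg : 0 ≤ Z := hZ ▸ Finset.sum_nonneg fun γ _ => (Real.exp_pos _).le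
  have hP_nonneg (γ : Fin n → Fin q) : 0 ≤ P γ :=
    hP γ ▸ mul_nonneg (inv_nonneg.2 hZ_nonneg) (Real.exp_pos _).le
  exact Finset.sum_nonneg fun γ _ =>
    mul_nonneg (R.prod_map_nonneg_of_forall_even_count _ hR) (hP_nonneg γ)

/-- ⟨σ^R⟩ ≥ 0 when every vertex occurs an even number of times in R. -/
theorem potts_even_multiset_expectation_nonneg (n q : ℕ) (hq : 2 ≤ q)
    (c : Fin q → ℝ) (hc : ∀ j : Fin q, c j = (j : ℝ) + 1 - (q + 1) / 2)
    (J : Finset (Fin n) → ℝ) (hJ : ∀ A, 0 ≤ J A)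
    (hJ2 : ∀ A : Finset (Fin n), A.card < 2 → J A = 0)
    (H : (Fin n → Fin q) → ℝ)
    (hH : ∀ γ, H γ = -∑ A : Finset (Fin n),
      J A * (if ∀ i ∈ A, ∀ j ∈ A, γ i = γ j then 1 else 0))
    (Z : ℝ) (hZ : Z = ∑ γ : Fin n → Fin q, Real.exp (-H γ))
    (P : (Fin n → Fin q) → ℝ) (hP : ∀ γ, P γ = Z⁻¹ * Real.exp (-H γ))
    (R : Multiset (Fin n)) (hR : ∀ i, Even (R.count i)) :
    0 ≤ ∑ γ : Fin n → Fin q, (R.map fun i => c (γ i)).prod * P γ :=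
  potts_even_multiset_expectation_nonneg_general n q c H Z hZ P hP R hR
end

section
/- (First Griffiths inequality for the Potts model) In the generalized ferromagnetic Potts model with multi-spin interactions, for any multiset R of vertices, the Gibbs expectation ⟨σ^R⟩ = ⟨∏_{i∈R} σᵢ'⟩ ≥ 0. -/
lemma potts_powSum_nonneg (q m : ℕ) (c : Fin q → ℝ)
    (hc : ∀ j : Fin q, c j = (j : ℝ) + 1 - (q + 1) / 2) :
    0 ≤ ∑ j : Fin q, c j ^ m := by
  rcases Nat.even_or_odd m with he | ho
  · exact Finset.sum_nonneg fun j _ => he.pow_nonneg _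
  · have hneg : ∀ j : Fin q, c (Fin.rev j) = -(c j) := by
      intro j
      have hq : 1 ≤ q := j.pos
      have hj : j.val + 1 ≤ q := j.isLt
      rw [hc, hc]
      have hv : ((Fin.rev j : Fin q) : ℕ) = q - (j.val + 1) := rfl
      have : (((Fin.rev j : Fin q) : ℕ) : ℝ) = (q : ℝ) - (j.val + 1) := by
        rw [hv, Nat.cast_sub hj]; push_cast; ring
      rw [this]; push_cast; ring
    have key : ∑ j : Fin q, c j ^ m = -∑ j : Fin q, c j ^ m := by
      calc ∑ j : Fin q, c j ^ m = ∑ j : Fin q, c (Fin.rev j) ^ m :=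
            Fintype.sum_equiv Fin.revPerm (fun j => c j ^ m)
              (fun j => c (Fin.rev j) ^ m) (fun j => by simp)
        _ = ∑ j : Fin q, -(c j ^ m) := by
            refine Finset.sum_congr rfl fun j _ => ?_
            rw [hneg, ho.neg_pow]
        _ = -∑ j : Fin q, c j ^ m := by rw [Finset.sum_neg_distrib]
    linarith

lemma potts_key (n q : ℕ) (c : Fin q → ℝ)
    (hpow : ∀ m : ℕ, 0 ≤ ∑ j : Fin q, c j ^ m)
    (R : Multiset (Fin n)) (t : Finset (Finset (Fin n))) :
    0 ≤ ∑ γ : Fin n → Fin q, (R.map fun i => c (γ i)).prod *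
      (if ∀ A ∈ t, ∀ i ∈ A, ∀ j ∈ A, γ i = γ j then 1 else 0) := by
  classical
  set r : Fin n → Fin n → Prop := fun i j => ∃ A ∈ t, i ∈ A ∧ j ∈ A with hr
  set s : Setoid (Fin n) := Relation.EqvGen.setoid r with hs
  letI : Fintype (Quotient s) := Fintype.ofFinite _
  have wd : ∀ γ : Fin n → Fin q, (∀ A ∈ t, ∀ i ∈ A, ∀ j ∈ A, γ i = γ j) →
      ∀ a b : Fin n, Relation.EqvGen r a b → γ a = γ b := by
    intro γ hγ a b hab
    induction hab with
    | rel x y hxy => obtain ⟨A, hA, hx, hy⟩ := hxy; exact hγ A hA x hx y hy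
    | refl x => rfl
    | symm x y _ ih => exact ih.symm
    | trans x y z _ _ ih1 ih2 => exact ih1.trans ih2
  have stepA : ∑ γ : Fin n → Fin q, (R.map fun i => c (γ i)).prod *
      (if ∀ A ∈ t, ∀ i ∈ A, ∀ j ∈ A, γ i = γ j then 1 else 0)
      = ∑ γ ∈ Finset.univ.filter (fun γ : Fin n → Fin q => ∀ A ∈ t, ∀ i ∈ A, ∀ j ∈ A, γ i = γ j),
          (R.map fun i => c (γ i)).prod := by
    rw [Finset.sum_filter]
    refine Finset.sum_congr rfl fun γ _ => ?_
    split_ifs <;> simp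
  rw [stepA]
  have stepB : ∑ γ ∈ Finset.univ.filter (fun γ : Fin n → Fin q => ∀ A ∈ t, ∀ i ∈ A, ∀ j ∈ A, γ i = γ j),
          (R.map fun i => c (γ i)).prod
      = ∑ f : Quotient s → Fin q, (R.map fun i => c (f (Quotient.mk s i))).prod := by
    refine Finset.sum_bij'
      (i := fun (γ : Fin n → Fin q) hγ =>
        (fun x => Quotient.liftOn x γ (wd γ (by simpa using hγ)) : Quotient s → Fin q))
      (j := fun (f : Quotient s → Fin q) _ => (fun i => f (Quotient.mk s i)))
      (fun γ hγ => Finset.mem_univ _) ?_ ?_ ?_ ?_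
    · intro f _
      simp only [Finset.mem_filter, Finset.mem_univ, true_and]
      intro A hA i hi j hj
      exact congrArg f (Quotient.sound (Relation.EqvGen.rel i j ⟨A, hA, hi, hj⟩))
    · intro γ hγ; rfl
    · intro f hf; funext x; induction x using Quotient.ind; rfl
    · intro γ hγ; rfl
  rw [stepB]
  have stepC : ∀ f : Quotient s → Fin q,
      (R.map fun i => c (f (Quotient.mk s i))).prod
        = ∏ x : Quotient s, c (f x) ^ ((R.map (Quotient.mk s)).count x) := by
    intro f
    have h1 : (R.map fun i => c (f (Quotient.mk s i))).prod
        = ((R.map (Quotient.mk s)).map fun x => c (f x)).prod := by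
      rw [Multiset.map_map]; rfl
    rw [h1, Finset.prod_multiset_map_count]
    refine Finset.prod_subset (Finset.subset_univ _) fun x _ hx => ?_
    rw [Multiset.count_eq_zero_of_notMem (by simpa using hx), pow_zero]
  simp_rw [stepC]
  have stepD : ∑ f : Quotient s → Fin q, ∏ x : Quotient s, c (f x) ^ ((R.map (Quotient.mk s)).count x)
      = ∏ x : Quotient s, ∑ j : Fin q, c j ^ ((R.map (Quotient.mk s)).count x) := by
    rw [Finset.prod_univ_sum, ← Fintype.piFinset_univ]
  rw [stepD]
  exact Finset.prod_nonneg fun x _ => hpow _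

theorem potts_main_core (n q : ℕ) (c : Fin q → ℝ)
    (hkey : ∀ (R : Multiset (Fin n)) (t : Finset (Finset (Fin n))),
      0 ≤ ∑ γ : Fin n → Fin q, (R.map fun i => c (γ i)).prod *
        (if ∀ A ∈ t, ∀ i ∈ A, ∀ j ∈ A, γ i = γ j then 1 else 0))
    (J : Finset (Fin n) → ℝ) (hJ : ∀ A, 0 ≤ J A)
    (H : (Fin n → Fin q) → ℝ)
    (hH : ∀ γ, H γ = -∑ A : Finset (Fin n),
      J A * (if ∀ i ∈ A, ∀ j ∈ A, γ i = γ j then 1 else 0))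
    (R : Multiset (Fin n)) :
    0 ≤ ∑ γ : Fin n → Fin q, (R.map fun i => c (γ i)).prod * Real.exp (-H γ) := by
  classical
  have hexp : ∀ γ : Fin n → Fin q, Real.exp (-H γ)
      = ∑ t ∈ (Finset.univ : Finset (Finset (Fin n))).powerset,
          (∏ A ∈ t, (Real.exp (J A) - 1) *
            (if ∀ i ∈ A, ∀ j ∈ A, γ i = γ j then 1 else 0)) *
          ∏ A ∈ Finset.univ \ t, (1 : ℝ) := by
    intro γ
    rw [hH γ, neg_neg, Real.exp_sum, ← Finset.prod_add]
    refine Finset.prod_congr rfl fun A _ => ?_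
    split_ifs <;> simp
  simp_rw [hexp, Finset.prod_const_one, mul_one, Finset.mul_sum]
  rw [Finset.sum_comm]
  refine Finset.sum_nonneg fun t _ => ?_
  have hfac : ∀ γ : Fin n → Fin q,
      (R.map fun i => c (γ i)).prod *
        ∏ A ∈ t, (Real.exp (J A) - 1) * (if ∀ i ∈ A, ∀ j ∈ A, γ i = γ j then 1 else 0)
      = (∏ A ∈ t, (Real.exp (J A) - 1)) *
        ((R.map fun i => c (γ i)).prod *
          (if ∀ A ∈ t, ∀ i ∈ A, ∀ j ∈ A, γ i = γ j then 1 else 0)) := by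
    intro γ
    rw [Finset.prod_mul_distrib, Finset.prod_boole, mul_left_comm]
    congr 2
    · simp
  simp_rw [hfac, ← Finset.mul_sum]
  refine mul_nonneg (Finset.prod_nonneg fun A _ => ?_) (hkey R t)
  have := Real.one_le_exp (hJ A)
  linarith

/-- First Griffiths inequality for the Potts model: ⟨σ^R⟩ ≥ 0. -/
theorem potts_first_griffiths (n q : ℕ) (hq : 2 ≤ q)
    (c : Fin q → ℝ) (hc : ∀ j : Fin q, c j = (j : ℝ) + 1 - (q + 1) / 2)
    (J : Finset (Fin n) → ℝ) (hJ : ∀ A, 0 ≤ J A)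
    (hJ2 : ∀ A : Finset (Fin n), A.card < 2 → J A = 0)
    (H : (Fin n → Fin q) → ℝ)
    (hH : ∀ γ, H γ = -∑ A : Finset (Fin n),
      J A * (if ∀ i ∈ A, ∀ j ∈ A, γ i = γ j then 1 else 0))
    (Z : ℝ) (hZ : Z = ∑ γ : Fin n → Fin q, Real.exp (-H γ))
    (P : (Fin n → Fin q) → ℝ) (hP : ∀ γ, P γ = Z⁻¹ * Real.exp (-H γ))
    (R : Multiset (Fin n)) :
    0 ≤ ∑ γ : Fin n → Fin q, (R.map fun i => c (γ i)).prod * P γ := by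
  classical
  have hpow : ∀ m : ℕ, 0 ≤ ∑ j : Fin q, c j ^ m :=
    fun m => potts_powSum_nonneg q m c hc
  have hkey := potts_key n q c hpow
  have hcore := potts_main_core n q c (fun R t => hkey R t) J hJ H hH R
  have hZnn : 0 ≤ Z := by
    rw [hZ]; exact Finset.sum_nonneg fun γ _ => (Real.exp_pos _).le
  simp_rw [hP, mul_left_comm, ← Finset.mul_sum]
  exact mul_nonneg (inv_nonneg.mpr hZnn) hcore
end

section
/- (Second Griffiths inequality for the Potts model) In the generalized ferromagnetic Potts model with multi-spin interactions, for any two multisets R and S of vertices, ⟨σ^R σ^S⟩ − ⟨σ^R⟩⟨σ^S⟩ ≥ 0, i.e., σ^R and σ^S are nonnegatively correlated under the Gibbs measure. -/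
open Finset

namespace PottsAux

/-! ### Generic finite commutative group fact -/

theorem card_sup_mul_card_inf {G : Type*} [CommGroup G] [Finite G] (H K : Subgroup G) :
    Nat.card H * Nat.card K = Nat.card ↥(H ⊔ K) * Nat.card ↥(H ⊓ K) := by
  have e := QuotientGroup.quotientInfEquivProdNormalQuotient H K
  have h1 : Nat.card H = Nat.card (↥H ⧸ K.subgroupOf H) * Nat.card (K.subgroupOf H) :=
    Subgroup.card_eq_card_quotient_mul_card_subgroup _
  have h2 : Nat.card ↥(H ⊔ K)
      = Nat.card (↥(H ⊔ K) ⧸ K.subgroupOf (H ⊔ K)) * Nat.card (K.subgroupOf (H ⊔ K)) :=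
    Subgroup.card_eq_card_quotient_mul_card_subgroup _
  have h3 : Nat.card (K.subgroupOf H) = Nat.card ↥(H ⊓ K) := by
    rw [← Subgroup.inf_subgroupOf_right K H, inf_comm K H]
    exact Nat.card_congr (Subgroup.subgroupOfEquivOfLe inf_le_left).toEquiv
  have h4 : Nat.card (K.subgroupOf (H ⊔ K)) = Nat.card K :=
    Nat.card_congr (Subgroup.subgroupOfEquivOfLe le_sup_right).toEquiv
  have h5 : Nat.card (↥H ⧸ K.subgroupOf H)
      = Nat.card (↥(H ⊔ K) ⧸ K.subgroupOf (H ⊔ K)) := Nat.card_congr e.toEquiv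
  rw [h1, h2, h3, h4, h5]
  ring

/-! ### Compatibility with constraints, and the quotient structure -/

variable {n q : ℕ}

def compat (ω : Finset (Finset (Fin n))) {α : Type*} (γ : Fin n → α) : Prop :=
  ∀ A ∈ ω, ∀ i ∈ A, ∀ j ∈ A, γ i = γ j

noncomputable instance (ω : Finset (Finset (Fin n))) {α : Type*} (γ : Fin n → α) :
    Decidable (compat ω γ) := Classical.dec _

theorem compat_anti {ω ω' : Finset (Finset (Fin n))} {α : Type*} {γ : Fin n → α}
    (hsub : ω' ⊆ ω) (h : compat ω γ) : compat ω' γ :=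
  fun A hA => h A (hsub hA)

def prel (ω : Finset (Finset (Fin n))) : Fin n → Fin n → Prop :=
  fun x y => ∃ A ∈ ω, x ∈ A ∧ y ∈ A

abbrev Qt (ω : Finset (Finset (Fin n))) := Quot (prel ω)

def proj (ω : Finset (Finset (Fin n))) : Fin n → Qt ω := Quot.mk _

noncomputable instance (ω : Finset (Finset (Fin n))) : Fintype (Qt ω) :=
  Fintype.ofFinite _

noncomputable instance (ω : Finset (Finset (Fin n))) : DecidableEq (Qt ω) :=
  Classical.decEq _

noncomputable def cnt (ω : Finset (Finset (Fin n))) (R : Multiset (Fin n)) (x : Qt ω) : ℕ :=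
  ((R.map (proj ω)).count x)

theorem cnt_add (ω : Finset (Finset (Fin n))) (R S : Multiset (Fin n)) (x : Qt ω) :
    cnt ω (R + S) x = cnt ω R x + cnt ω S x := by
  simp [cnt]

theorem cnt_zero (ω : Finset (Finset (Fin n))) (x : Qt ω) : cnt ω 0 x = 0 := by
  simp [cnt]

/-! ### Moments -/

variable (c : Fin q → ℝ)

noncomputable def M (m : ℕ) : ℝ := ∑ j : Fin q, c j ^ m

noncomputable def mu (m : ℕ) : ℝ := M c m / q

theorem M_odd (hsym : ∀ j : Fin q, c j.rev = - c j) {m : ℕ} (hm : Odd m) : M c m = 0 := by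
  have h1 : M c m = - M c m := by
    nth_rewrite 1 [M]
    rw [← Equiv.sum_comp Fin.revPerm (fun j => c j ^ m)]
    simp only [Fin.revPerm_apply, hsym, hm.neg_pow, M, Finset.sum_neg_distrib]
  linarith

theorem M_even_nonneg {m : ℕ} (hm : Even m) : 0 ≤ M c m :=
  Finset.sum_nonneg fun j _ => hm.pow_nonneg _

theorem M_nonneg (hsym : ∀ j : Fin q, c j.rev = - c j) (m : ℕ) : 0 ≤ M c m := by
  rcases Nat.even_or_odd m with h | h
  · exact M_even_nonneg c h
  · rw [M_odd c hsym h]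

theorem M_zero (hq0 : 0 < q) : M c 0 = q := by
  simp [M]

theorem M_mom (hsym : ∀ j : Fin q, c j.rev = - c j) (a b : ℕ) :
    M c a * M c b ≤ q * M c (a + b) := by
  rcases Nat.even_or_odd a with ha | ha
  · rcases Nat.even_or_odd b with hb | hb
    · obtain ⟨a', rfl⟩ := ha
      obtain ⟨b', rfl⟩ := hb
      have key : ∑ j : Fin q, ∑ k : Fin q,
          (c j ^ (a' + a') - c k ^ (a' + a')) * (c j ^ (b' + b') - c k ^ (b' + b'))
          = 2 * ((q : ℝ) * M c (a' + a' + (b' + b')) - M c (a' + a') * M c (b' + b')) := by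
        have expand : ∀ j k : Fin q,
            (c j ^ (a' + a') - c k ^ (a' + a')) * (c j ^ (b' + b') - c k ^ (b' + b'))
            = c j ^ (a' + a' + (b' + b')) + c k ^ (a' + a' + (b' + b'))
              - c j ^ (a' + a') * c k ^ (b' + b') - c k ^ (a' + a') * c j ^ (b' + b') := by
          intro j k
          rw [pow_add (c j) (a' + a') (b' + b'), pow_add (c k) (a' + a') (b' + b')]
          ring
        simp only [expand, Finset.sum_add_distrib, Finset.sum_sub_distrib,
          Finset.sum_const, Finset.card_univ, Fintype.card_fin, ← Finset.sum_mul,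
          ← Finset.mul_sum, M, nsmul_eq_mul]
        ring
      have pos : 0 ≤ ∑ j : Fin q, ∑ k : Fin q,
          (c j ^ (a' + a') - c k ^ (a' + a')) * (c j ^ (b' + b') - c k ^ (b' + b')) := by
        refine Finset.sum_nonneg fun j _ => Finset.sum_nonneg fun k _ => ?_
        have hsq : ∀ (x : ℝ) (m : ℕ), x ^ (m + m) = (x^2) ^ m := by
          intro x m
          rw [← pow_mul, two_mul]
        rw [hsq (c j) a', hsq (c k) a', hsq (c j) b', hsq (c k) b']
        rcases le_total ((c j)^2) ((c k)^2) with h | h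
        · exact mul_nonneg_of_nonpos_of_nonpos
            (sub_nonpos.mpr (pow_le_pow_left₀ (sq_nonneg _) h _))
            (sub_nonpos.mpr (pow_le_pow_left₀ (sq_nonneg _) h _))
        · exact mul_nonneg
            (sub_nonneg.mpr (pow_le_pow_left₀ (sq_nonneg _) h _))
            (sub_nonneg.mpr (pow_le_pow_left₀ (sq_nonneg _) h _))
      rw [key] at pos
      linarith
    · rw [M_odd c hsym hb, mul_zero]
      exact mul_nonneg (Nat.cast_nonneg _) (M_nonneg c hsym _)
  · rw [M_odd c hsym ha, zero_mul]
    exact mul_nonneg (Nat.cast_nonneg _) (M_nonneg c hsym _)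

section mulemmas
variable (hq0 : 0 < q) (hsym : ∀ j : Fin q, c j.rev = - c j)

include hq0 hsym in
theorem mu_nonneg (m : ℕ) : 0 ≤ mu c m := by
  have : (0:ℝ) < q := by exact_mod_cast hq0
  exact div_nonneg (M_nonneg c hsym m) this.le

include hq0 in
theorem mu_zero : mu c 0 = 1 := by
  have : (0:ℝ) < q := by exact_mod_cast hq0
  simp [mu, M, this.ne']

include hq0 hsym in
theorem mu_mom (a b : ℕ) : mu c a * mu c b ≤ mu c (a + b) := by
  have hqr : (0:ℝ) < q := by exact_mod_cast hq0
  rw [mu, mu, mu, div_mul_div_comm, div_le_div_iff₀ (by positivity) hqr]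
  nlinarith [M_mom c hsym a b]

include hq0 hsym in
theorem mu_superadd {X : Type*} (s : Finset X) (k : X → ℕ) :
    ∏ x ∈ s, mu c (k x) ≤ mu c (∑ x ∈ s, k x) := by
  induction s using Finset.cons_induction with
  | empty => simp [mu_zero c hq0]
  | cons a s ha ih =>
    rw [Finset.prod_cons, Finset.sum_cons]
    calc mu c (k a) * ∏ x ∈ s, mu c (k x) ≤ mu c (k a) * mu c (∑ x ∈ s, k x) :=
          mul_le_mul_of_nonneg_left ih (mu_nonneg c hq0 hsym _)
      _ ≤ mu c (k a + ∑ x ∈ s, k x) := mu_mom c hq0 hsym _ _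

end mulemmas

/-! ### Counting fibers -/

theorem count_map_eq_sum_fiber {Q Q' : Type*} [Fintype Q] [DecidableEq Q] [DecidableEq Q']
    (phi : Q → Q') (T : Multiset Q) (y : Q') :
    (T.map phi).count y = ∑ x ∈ Finset.univ.filter (fun x => phi x = y), T.count x := by
  induction T using Multiset.induction with
  | empty => simp
  | cons a T ih =>
    rw [Multiset.map_cons, Multiset.count_cons, ih]
    have hrw : ∑ x ∈ Finset.univ.filter (fun x => phi x = y), (a ::ₘ T).count x
        = ∑ x ∈ Finset.univ.filter (fun x => phi x = y),
            (T.count x + if x = a then 1 else 0) :=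
      Finset.sum_congr rfl fun x _ => Multiset.count_cons x a T
    rw [hrw, Finset.sum_add_distrib,
      Finset.sum_ite_eq' (Finset.univ.filter (fun x => phi x = y)) a (fun _ => 1)]
    simp only [Finset.mem_filter, Finset.mem_univ, true_and]
    congr 1
    by_cases h : phi a = y
    · simp [h]
    · simp only [h, if_false]
      rw [if_neg]
      intro hy; exact h hy.symm

theorem prod_mu_fiber_le {Q Q' : Type*} [Fintype Q] [Fintype Q'] [DecidableEq Q']
    (hq0 : 0 < q) (hsym : ∀ j : Fin q, c j.rev = - c j)
    (phi : Q → Q') (k : Q → ℕ) :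
    ∏ x : Q, mu c (k x) ≤ ∏ y : Q', mu c (∑ x ∈ Finset.univ.filter (fun x => phi x = y), k x) := by
  classical
  have hfib := Finset.prod_fiberwise_eq_prod_filter (Finset.univ : Finset Q)
    (Finset.univ : Finset Q') phi (fun x => mu c (k x))
  simp only [Finset.mem_univ, Finset.filter_true] at hfib
  rw [← hfib]
  refine Finset.prod_le_prod (fun y _ => Finset.prod_nonneg fun x _ => mu_nonneg c hq0 hsym _)
    (fun y _ => mu_superadd c hq0 hsym _ _)

/-! ### The partition function restricted to constraints -/

noncomputable def NN (ω : Finset (Finset (Fin n))) (R : Multiset (Fin n)) : ℝ :=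
  ∑ γ : Fin n → Fin q, (R.map fun i => c (γ i)).prod * (if compat ω γ then 1 else 0)

theorem multiset_map_prod_count {Q M : Type*} [Fintype Q] [DecidableEq Q] [CommMonoid M]
    (T : Multiset Q) (g : Q → M) :
    (T.map g).prod = ∏ x : Q, g x ^ T.count x := by
  rw [Finset.prod_multiset_map_count]
  refine Finset.prod_subset (Finset.subset_univ _) ?_
  intro x _ hx
  rw [Multiset.count_eq_zero_of_notMem (by simpa using hx), pow_zero]

theorem sum_fun_prod_pow {Q : Type*} [Fintype Q] [DecidableEq Q] (k : Q → ℕ) :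
    ∑ h : Q → Fin q, ∏ x : Q, c (h x) ^ k x = ∏ x : Q, ∑ j : Fin q, c j ^ k x := by
  rw [Finset.prod_univ_sum (fun _ => (Finset.univ : Finset (Fin q))) (fun x j => c j ^ k x)]
  rw [Fintype.piFinset_univ]

theorem NN_eq_prod (ω : Finset (Finset (Fin n))) (R : Multiset (Fin n)) :
    NN c ω R = ∏ x : Qt ω, M c (cnt ω R x) := by
  have step1 : NN c ω R
      = ∑ h : Qt ω → Fin q, (R.map fun i => c (h (proj ω i))).prod := by
    rw [NN]
    have hite : ∀ γ : Fin n → Fin q,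
        (R.map fun i => c (γ i)).prod * (if compat ω γ then 1 else 0)
        = if compat ω γ then (R.map fun i => c (γ i)).prod else 0 := by
      intro γ; split <;> simp
    simp_rw [hite]
    rw [← Finset.sum_filter]
    symm
    refine Finset.sum_bij' (fun (h : Qt ω → Fin q) _ => h ∘ proj ω)
      (fun γ hγ => Quot.lift γ ?_) ?_ ?_ ?_ ?_ ?_
    · rintro a b ⟨A, hA, ha, hb⟩
      exact (Finset.mem_filter.mp hγ).2 A hA a ha b hb
    · intro h _
      refine Finset.mem_filter.mpr ⟨Finset.mem_univ _, ?_⟩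
      intro A hA i hi j hj
      exact congrArg h (Quot.sound ⟨A, hA, hi, hj⟩)
    · intro γ hγ; exact Finset.mem_univ _
    · intro h hh
      funext x
      induction x using Quot.ind
      rfl
    · intro γ hγ
      funext i
      rfl
    · intro h hh
      rfl
  rw [step1]
  have step2 : ∀ h : Qt ω → Fin q,
      (R.map fun i => c (h (proj ω i))).prod = ∏ x : Qt ω, c (h x) ^ cnt ω R x := by
    intro h
    rw [show (R.map fun i => c (h (proj ω i))) = (R.map (proj ω)).map (fun x => c (h x)) by
      rw [Multiset.map_map]; rfl]
    exact multiset_map_prod_count _ _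
  simp_rw [step2]
  rw [sum_fun_prod_pow]
  rfl

theorem NN_nonneg (hsym : ∀ j : Fin q, c j.rev = - c j)
    (ω : Finset (Finset (Fin n))) (R : Multiset (Fin n)) : 0 ≤ NN c ω R := by
  rw [NN_eq_prod]
  exact Finset.prod_nonneg fun x _ => M_nonneg c hsym _

/-! ### Counting compatible configurations via subgroups -/

noncomputable def K0 (n q : ℕ) (ω : Finset (Finset (Fin n))) : ℕ :=
  (Finset.univ.filter (fun γ : Fin n → Fin q => compat ω γ)).card

def Sg (n q : ℕ) (ω : Finset (Finset (Fin n))) :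
    Subgroup (Fin n → Multiplicative (ZMod q)) where
  carrier := {γ | compat ω γ}
  one_mem' := fun _ _ _ _ _ _ => rfl
  mul_mem' := by
    intro a b ha hb A hA i hi j hj
    simp only [Pi.mul_apply, ha A hA i hi j hj, hb A hA i hi j hj]
  inv_mem' := by
    intro a ha A hA i hi j hj
    simp only [Pi.inv_apply, ha A hA i hi j hj]

theorem K0_eq_card_Sg (hq0 : 0 < q) (ω : Finset (Finset (Fin n))) :
    K0 n q ω = Nat.card (Sg n q ω) := by
  haveI : NeZero q := ⟨hq0.ne'⟩
  have e : Fin q ≃ Multiplicative (ZMod q) :=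
    Fintype.equivOfCardEq (by simp [ZMod.card])
  have he : ∀ (γ : Fin n → Fin q), compat ω (fun i => e (γ i)) ↔ compat ω γ := by
    intro γ
    constructor
    · intro h A hA i hi j hj; exact e.injective (h A hA i hi j hj)
    · intro h A hA i hi j hj; exact congrArg e (h A hA i hi j hj)
  have h1 : K0 n q ω = Nat.card {γ : Fin n → Fin q // compat ω γ} := by
    rw [Nat.card_eq_fintype_card, Fintype.card_subtype]
    rfl
  rw [h1]
  refine Nat.card_congr ?_
  exact (Equiv.subtypeEquiv (Equiv.piCongrRight fun _ => e) (fun γ => (he γ).symm)).trans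
    (Equiv.subtypeEquivRight fun γ => Iff.rfl)

theorem Sg_inf (ω η : Finset (Finset (Fin n))) :
    Sg n q ω ⊓ Sg n q η = Sg n q (ω ∪ η) := by
  ext γ
  simp only [Subgroup.mem_inf]
  constructor
  · rintro ⟨h1, h2⟩ A hA
    rcases Finset.mem_union.mp hA with h | h
    · exact h1 A h
    · exact h2 A h
  · intro h
    exact ⟨fun A hA => h A (Finset.mem_union_left _ hA),
      fun A hA => h A (Finset.mem_union_right _ hA)⟩

theorem Sg_sup_le (ω η : Finset (Finset (Fin n))) :
    Sg n q ω ⊔ Sg n q η ≤ Sg n q (ω ∩ η) :=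
  sup_le (fun _ h => compat_anti Finset.inter_subset_left h)
    (fun _ h => compat_anti Finset.inter_subset_right h)

theorem K0_ineq (hq0 : 0 < q) (ω η : Finset (Finset (Fin n))) :
    K0 n q ω * K0 n q η ≤ K0 n q (ω ∪ η) * K0 n q (ω ∩ η) := by
  haveI : NeZero q := ⟨hq0.ne'⟩
  rw [K0_eq_card_Sg hq0, K0_eq_card_Sg hq0, K0_eq_card_Sg hq0, K0_eq_card_Sg hq0]
  rw [← Sg_inf]
  calc Nat.card (Sg n q ω) * Nat.card (Sg n q η)
      = Nat.card ↥(Sg n q ω ⊔ Sg n q η) * Nat.card ↥(Sg n q ω ⊓ Sg n q η) :=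
        card_sup_mul_card_inf _ _
    _ ≤ Nat.card (Sg n q (ω ∩ η)) * Nat.card ↥(Sg n q ω ⊓ Sg n q η) :=
        Nat.mul_le_mul_right _ (Subgroup.card_le_of_le (Sg_sup_le ω η))
    _ = Nat.card ↥(Sg n q ω ⊓ Sg n q η) * Nat.card (Sg n q (ω ∩ η)) := Nat.mul_comm _ _

/-! ### NN decomposition and the key inequality -/

noncomputable def Fq (ω : Finset (Finset (Fin n))) (R : Multiset (Fin n)) : ℝ :=
  ∏ x : Qt ω, mu c (cnt ω R x)

theorem NN_zero (ω : Finset (Finset (Fin n))) :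
    NN c ω (0 : Multiset (Fin n)) = (K0 n q ω : ℝ) := by
  rw [NN, K0]
  simp [Finset.sum_boole]

theorem Fq_nonneg (hq0 : 0 < q) (hsym : ∀ j : Fin q, c j.rev = - c j)
    (ω : Finset (Finset (Fin n))) (R : Multiset (Fin n)) : 0 ≤ Fq c ω R :=
  Finset.prod_nonneg fun x _ => mu_nonneg c hq0 hsym _

include c in
theorem K0_cast (hq0 : 0 < q) (ω : Finset (Finset (Fin n))) :
    (K0 n q ω : ℝ) = (q : ℝ) ^ (Fintype.card (Qt ω)) := by
  rw [← NN_zero c ω, NN_eq_prod]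
  simp only [cnt_zero, M_zero c hq0]
  rw [Finset.prod_const, Finset.card_univ]

theorem NN_decomp (hq0 : 0 < q) (ω : Finset (Finset (Fin n))) (R : Multiset (Fin n)) :
    NN c ω R = (K0 n q ω : ℝ) * Fq c ω R := by
  have hqr : (0:ℝ) < q := by exact_mod_cast hq0
  rw [NN_eq_prod, K0_cast c hq0, Fq, ← Finset.card_univ, ← Finset.prod_const,
    ← Finset.prod_mul_distrib]
  refine Finset.prod_congr rfl fun x _ => ?_
  rw [mu, mul_div_cancel₀ _ hqr.ne']

theorem Fq_coarsen (hq0 : 0 < q) (hsym : ∀ j : Fin q, c j.rev = - c j)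
    {ω ω' : Finset (Finset (Fin n))} (hsub : ω ⊆ ω') (R : Multiset (Fin n)) :
    Fq c ω R ≤ Fq c ω' R := by
  have hmono : ∀ a b : Fin n, prel ω a b → prel ω' a b := by
    rintro a b ⟨A, hA, ha, hb⟩
    exact ⟨A, hsub hA, ha, hb⟩
  set phi : Qt ω → Qt ω' := Quot.map id hmono with hphi
  have hproj : proj ω' = phi ∘ proj ω := by
    funext i; rfl
  have hcnt : ∀ y : Qt ω',
      cnt ω' R y = ∑ x ∈ Finset.univ.filter (fun x => phi x = y), cnt ω R x := by
    intro y
    rw [cnt, hproj, show R.map (phi ∘ proj ω) = (R.map (proj ω)).map phi by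
      rw [Multiset.map_map]]
    exact count_map_eq_sum_fiber phi _ y
  rw [Fq, Fq]
  simp_rw [hcnt]
  exact prod_mu_fiber_le c hq0 hsym phi _

theorem Fq_mul_le (hq0 : 0 < q) (hsym : ∀ j : Fin q, c j.rev = - c j)
    (ω : Finset (Finset (Fin n))) (R S : Multiset (Fin n)) :
    Fq c ω R * Fq c ω S ≤ Fq c ω (R + S) := by
  rw [Fq, Fq, Fq, ← Finset.prod_mul_distrib]
  refine Finset.prod_le_prod (fun x _ => mul_nonneg (mu_nonneg c hq0 hsym _)
    (mu_nonneg c hq0 hsym _)) (fun x _ => ?_)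
  rw [cnt_add]
  exact mu_mom c hq0 hsym _ _

theorem KEY (hq0 : 0 < q) (hsym : ∀ j : Fin q, c j.rev = - c j)
    (ω η : Finset (Finset (Fin n))) (R S : Multiset (Fin n)) :
    NN c ω R * NN c η S ≤ NN c (ω ∩ η) 0 * NN c (ω ∪ η) (R + S) := by
  rw [NN_decomp c hq0 ω R, NN_decomp c hq0 η S, NN_decomp c hq0 (ω ∪ η) (R + S),
    NN_zero c (ω ∩ η)]
  have h1 : Fq c ω R ≤ Fq c (ω ∪ η) R := Fq_coarsen c hq0 hsym Finset.subset_union_left R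
  have h2 : Fq c η S ≤ Fq c (ω ∪ η) S := Fq_coarsen c hq0 hsym Finset.subset_union_right S
  have h3 : Fq c (ω ∪ η) R * Fq c (ω ∪ η) S ≤ Fq c (ω ∪ η) (R + S) :=
    Fq_mul_le c hq0 hsym _ R S
  have hK : ((K0 n q ω : ℝ) * K0 n q η) ≤ (K0 n q (ω ∪ η) : ℝ) * K0 n q (ω ∩ η) := by
    exact_mod_cast K0_ineq hq0 ω η
  have hFnonneg : ∀ (ζ : Finset (Finset (Fin n))) (T : Multiset (Fin n)), 0 ≤ Fq c ζ T :=
    fun ζ T => Fq_nonneg c hq0 hsym ζ T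
  have hKnonneg : ∀ ζ : Finset (Finset (Fin n)), (0:ℝ) ≤ (K0 n q ζ : ℝ) :=
    fun ζ => Nat.cast_nonneg _
  calc (K0 n q ω : ℝ) * Fq c ω R * ((K0 n q η : ℝ) * Fq c η S)
      = ((K0 n q ω : ℝ) * K0 n q η) * (Fq c ω R * Fq c η S) := by ring
    _ ≤ ((K0 n q ω : ℝ) * K0 n q η) * (Fq c (ω ∪ η) R * Fq c (ω ∪ η) S) := by
        refine mul_le_mul_of_nonneg_left ?_ (mul_nonneg (hKnonneg _) (hKnonneg _))
        exact mul_le_mul h1 h2 (hFnonneg η S) (hFnonneg (ω ∪ η) R)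
    _ ≤ ((K0 n q ω : ℝ) * K0 n q η) * Fq c (ω ∪ η) (R + S) :=
        mul_le_mul_of_nonneg_left h3 (mul_nonneg (hKnonneg _) (hKnonneg _))
    _ ≤ ((K0 n q (ω ∪ η) : ℝ) * K0 n q (ω ∩ η)) * Fq c (ω ∪ η) (R + S) :=
        mul_le_mul_of_nonneg_right hK (hFnonneg _ _)
    _ = (K0 n q (ω ∩ η) : ℝ) * ((K0 n q (ω ∪ η) : ℝ) * Fq c (ω ∪ η) (R + S)) := by ring

end PottsAux

open PottsAux in
/-- Second Griffiths inequality for the Potts model: ⟨σ^R σ^S⟩ − ⟨σ^R⟩⟨σ^S⟩ ≥ 0. -/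
theorem potts_second_griffiths (n q : ℕ) (hq : 2 ≤ q)
    (c : Fin q → ℝ) (hc : ∀ j : Fin q, c j = (j : ℝ) + 1 - (q + 1) / 2)
    (J : Finset (Fin n) → ℝ) (hJ : ∀ A, 0 ≤ J A)
    (hJ2 : ∀ A : Finset (Fin n), A.card < 2 → J A = 0)
    (H : (Fin n → Fin q) → ℝ)
    (hH : ∀ γ, H γ = -∑ A : Finset (Fin n),
      J A * (if ∀ i ∈ A, ∀ j ∈ A, γ i = γ j then 1 else 0))
    (Z : ℝ) (hZ : Z = ∑ γ : Fin n → Fin q, Real.exp (-H γ))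
    (P : (Fin n → Fin q) → ℝ) (hP : ∀ γ, P γ = Z⁻¹ * Real.exp (-H γ))
    (R S : Multiset (Fin n)) :
    0 ≤ ∑ γ : Fin n → Fin q, ((R + S).map fun i => c (γ i)).prod * P γ
      - (∑ γ : Fin n → Fin q, (R.map fun i => c (γ i)).prod * P γ)
        * (∑ γ : Fin n → Fin q, (S.map fun i => c (γ i)).prod * P γ) := by
  classical
  have hq0 : 0 < q := by omega
  have hsym : ∀ j : Fin q, c j.rev = - c j := by
    intro j
    have hj : (j : ℕ) + 1 ≤ q := j.isLt
    rw [hc, hc, Fin.val_rev, Nat.cast_sub hj]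
    push_cast
    ring
  haveI : Nonempty (Fin q) := ⟨⟨0, hq0⟩⟩
  haveI : Nonempty (Fin n → Fin q) := ⟨fun _ => ⟨0, hq0⟩⟩
  set p : Finset (Fin n) → ℝ := fun A => Real.exp (J A) - 1 with hp
  have hpnn : ∀ A, 0 ≤ p A := fun A => sub_nonneg.mpr (Real.one_le_exp (hJ A))
  set W : Finset (Finset (Fin n)) → ℝ := fun ω => ∏ A ∈ ω, p A with hWdef
  have hWnn : ∀ ω, 0 ≤ W ω := fun ω => Finset.prod_nonneg (fun A _ => hpnn A)
  have hexp : ∀ γ : Fin n → Fin q, Real.exp (-H γ)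
      = ∑ ω : Finset (Finset (Fin n)), W ω * (if compat ω γ then 1 else 0) := by
    intro γ
    rw [hH, neg_neg, Real.exp_sum]
    have hfac : ∀ A : Finset (Fin n), Real.exp (J A *
        (if ∀ i ∈ A, ∀ j ∈ A, γ i = γ j then 1 else 0))
        = p A * (if ∀ i ∈ A, ∀ j ∈ A, γ i = γ j then 1 else 0) + 1 := by
      intro A
      split
      · rw [mul_one, mul_one, hp]
        simp
      · rw [mul_zero, mul_zero, Real.exp_zero, zero_add]
    simp_rw [hfac]
    rw [Finset.prod_add, Finset.powerset_univ]
    refine Finset.sum_congr rfl fun ω _ => ?_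
    rw [Finset.prod_const_one, mul_one]
    by_cases hcomp : compat ω γ
    · rw [if_pos hcomp, mul_one, hWdef]
      refine Finset.prod_congr rfl fun A hA => ?_
      rw [if_pos (hcomp A hA), mul_one]
    · rw [if_neg hcomp, mul_zero]
      rw [compat] at hcomp
      push_neg at hcomp
      obtain ⟨A, hA, hviol⟩ := hcomp
      refine Finset.prod_eq_zero hA ?_
      rw [if_neg ?_, mul_zero]
      push_neg
      exact hviol
  have hsum : ∀ X : Multiset (Fin n), ∑ γ : Fin n → Fin q,
      (X.map fun i => c (γ i)).prod * Real.exp (-H γ)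
      = ∑ ω : Finset (Finset (Fin n)), W ω * NN c ω X := by
    intro X
    simp_rw [hexp, Finset.mul_sum]
    rw [Finset.sum_comm]
    refine Finset.sum_congr rfl fun ω _ => ?_
    rw [NN, Finset.mul_sum]
    refine Finset.sum_congr rfl fun γ _ => ?_
    ring
  have hPsum : ∀ X : Multiset (Fin n),
      ∑ γ : Fin n → Fin q, (X.map fun i => c (γ i)).prod * P γ
      = Z⁻¹ * ∑ ω : Finset (Finset (Fin n)), W ω * NN c ω X := by
    intro X
    rw [← hsum, Finset.mul_sum]
    refine Finset.sum_congr rfl fun γ _ => ?_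
    rw [hP]
    ring
  have hZT : Z = ∑ ω : Finset (Finset (Fin n)), W ω * NN c ω (0 : Multiset (Fin n)) := by
    rw [hZ, ← hsum]
    simp
  have hZpos : 0 < Z := by
    rw [hZ]
    exact Finset.sum_pos (fun γ _ => Real.exp_pos _) Finset.univ_nonempty
  have h4 := four_functions_theorem_univ (fun ω => W ω * NN c ω R)
      (fun ω => W ω * NN c ω S) (fun ω => W ω * NN c ω (0 : Multiset (Fin n)))
      (fun ω => W ω * NN c ω (R + S))
      (fun ω => mul_nonneg (hWnn ω) (NN_nonneg c hsym ω R))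
      (fun ω => mul_nonneg (hWnn ω) (NN_nonneg c hsym ω S))
      (fun ω => mul_nonneg (hWnn ω) (NN_nonneg c hsym ω 0))
      (fun ω => mul_nonneg (hWnn ω) (NN_nonneg c hsym ω (R + S)))
      ?_
  · rw [hPsum (R + S), hPsum R, hPsum S, sub_nonneg]
    set TR := ∑ ω : Finset (Finset (Fin n)), W ω * NN c ω R with hTR
    set TS := ∑ ω : Finset (Finset (Fin n)), W ω * NN c ω S with hTS
    set TRS := ∑ ω : Finset (Finset (Fin n)), W ω * NN c ω (R + S) with hTRS
    have hZ1 : Z⁻¹ * Z = 1 := inv_mul_cancel₀ hZpos.ne'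
    have hfour : TR * TS ≤ Z * TRS := by
      rw [hZT]
      exact h4
    calc Z⁻¹ * TR * (Z⁻¹ * TS) = (Z⁻¹ * Z⁻¹) * (TR * TS) := by ring
      _ ≤ (Z⁻¹ * Z⁻¹) * (Z * TRS) := by
          refine mul_le_mul_of_nonneg_left hfour ?_
          positivity
      _ = (Z⁻¹ * Z) * (Z⁻¹ * TRS) := by ring
      _ = Z⁻¹ * TRS := by rw [hZ1, one_mul]
  · intro a b
    have hWsplit : W (a ∪ b) * W (a ∩ b) = W a * W b := Finset.prod_union_inter
    have hKey := KEY c hq0 hsym a b R S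
    calc (W a * NN c a R) * (W b * NN c b S)
        = (W a * W b) * (NN c a R * NN c b S) := by ring
      _ ≤ (W a * W b) * (NN c (a ∩ b) 0 * NN c (a ∪ b) (R + S)) := by
          refine mul_le_mul_of_nonneg_left hKey (mul_nonneg (hWnn a) (hWnn b))
      _ = (W (a ∩ b) * NN c (a ∩ b) 0) * (W (a ∪ b) * NN c (a ∪ b) (R + S)) := by
          rw [← hWsplit]; ring
      _ = (W (a ⊓ b) * NN c (a ⊓ b) 0) * (W (a ⊔ b) * NN c (a ⊔ b) (R + S)) := by
          rw [Finset.inf_eq_inter, Finset.sup_eq_union]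
end

section
/- Let F^c_q denote the centered spin set {j − (q+1)/2 : j = 1,...,q} and for even positive integers a, b set ξ_q = q·∑_{j∈F^c_q} j^{a+b} − (∑_{j∈F^c_q} j^a)(∑_{j∈F^c_q} j^b). Then ξ_{q+2} − ξ_q = 2·∑_{j∈F^c_q} (((q+1)/2)^a − j^a)(((q+1)/2)^b − j^b), and this quantity is nonnegative. -/
private lemma even_pow_le {x c : ℝ} (hc : 0 ≤ c) (h : |x| ≤ c) {k : ℕ} (hk : Even k) :
    x ^ k ≤ c ^ k := by
  rw [← Even.pow_abs hk x]
  exact pow_le_pow_left₀ (abs_nonneg x) h k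

/-- The recursion ξ_{q+2} − ξ_q = 2·∑_{j∈F^c_q} (((q+1)/2)^a − j^a)(((q+1)/2)^b − j^b) ≥ 0. -/
theorem xi_recursion (q : ℕ) (hq : 2 ≤ q)
    (Fc : ℕ → Finset ℝ)
    (hFc : ∀ m, Fc m = (Finset.range m).image (fun j : ℕ => (j : ℝ) + 1 - (m + 1) / 2))
    (a b : ℕ) (ha : Even a) (ha' : 0 < a) (hb : Even b) (hb' : 0 < b)
    (ξ : ℕ → ℝ)
    (hξ : ∀ m, ξ m = (m : ℝ) * ∑ j ∈ Fc m, j ^ (a + b)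
      - (∑ j ∈ Fc m, j ^ a) * (∑ j ∈ Fc m, j ^ b)) :
    ξ (q + 2) - ξ q
      = 2 * ∑ j ∈ Fc q, ((((q : ℝ) + 1) / 2) ^ a - j ^ a) * ((((q : ℝ) + 1) / 2) ^ b - j ^ b)
      ∧ 0 ≤ ξ (q + 2) - ξ q := by
  set c : ℝ := ((q : ℝ) + 1) / 2 with hc
  have hinj : ∀ m : ℕ, ∀ x ∈ Finset.range m, ∀ y ∈ Finset.range m,
      ((x : ℝ) + 1 - ((m : ℝ) + 1) / 2 = (y : ℝ) + 1 - ((m : ℝ) + 1) / 2) → x = y := by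
    intro m x _ y _ h
    have : (x : ℝ) = y := by linarith
    exact_mod_cast this
  -- key: sums over Fc (q+2) in terms of sums over Fc q
  have key : ∀ k : ℕ, Even k →
      ∑ j ∈ Fc (q + 2), j ^ k = (∑ j ∈ Fc q, j ^ k) + 2 * c ^ k := by
    intro k hk
    rw [hFc (q + 2), hFc q]
    rw [Finset.sum_image (fun x hx y hy h => hinj (q + 2) x hx y hy (by push_cast at h ⊢; exact_mod_cast h)),
        Finset.sum_image (fun x hx y hy h => hinj q x hx y hy (by push_cast at h ⊢; exact_mod_cast h))]
    rw [show q + 2 = (q + 1) + 1 from rfl, Finset.sum_range_succ, Finset.sum_range_succ']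
    have h1 : ∀ j ∈ Finset.range q,
        ((j + 1 : ℕ) : ℝ) + 1 - (((q : ℕ) + 2 : ℕ) + 1 : ℝ) / 2
          = (j : ℝ) + 1 - ((q : ℝ) + 1) / 2 := by
      intro j _; push_cast; ring
    rw [Finset.sum_congr rfl (fun j hj => by rw [h1 j hj])]
    push_cast
    have hA : (0 : ℝ) + 1 - ((q : ℝ) + 1 + 1 + 1) / 2 = -c := by rw [hc]; ring
    have hB : (q : ℝ) + 1 + 1 - ((q : ℝ) + 1 + 1 + 1) / 2 = c := by rw [hc]; ring
    rw [hA, hB, Even.neg_pow hk]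
    ring
  have hcard : ((Fc q).card : ℝ) = q := by
    rw [hFc q, Finset.card_image_of_injOn (fun x hx y hy h => hinj q x hx y hy h),
      Finset.card_range]
  -- expansion of the RHS sum
  have expand : ∑ j ∈ Fc q, (c ^ a - j ^ a) * (c ^ b - j ^ b)
      = (q : ℝ) * c ^ (a + b) - c ^ a * (∑ j ∈ Fc q, j ^ b)
        - c ^ b * (∑ j ∈ Fc q, j ^ a) + ∑ j ∈ Fc q, j ^ (a + b) := by
    have : ∀ j : ℝ, (c ^ a - j ^ a) * (c ^ b - j ^ b)
        = c ^ (a + b) - c ^ a * j ^ b - c ^ b * j ^ a + j ^ (a + b) := by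
      intro j; rw [pow_add, pow_add]; ring
    rw [Finset.sum_congr rfl (fun j _ => this j)]
    simp only [Finset.sum_add_distrib, Finset.sum_sub_distrib, ← Finset.mul_sum,
      Finset.sum_const, nsmul_eq_mul, hcard]
  have hab : Even (a + b) := Even.add ha hb
  have main : ξ (q + 2) - ξ q
      = 2 * ∑ j ∈ Fc q, (c ^ a - j ^ a) * (c ^ b - j ^ b) := by
    rw [hξ (q + 2), hξ q, key _ hab, key _ ha, key _ hb, expand]
    push_cast
    rw [pow_add]
    ring
  refine ⟨main, ?_⟩
  rw [main]
  have hcpos : 0 ≤ c := by positivity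
  have hterm : ∀ j ∈ Fc q, 0 ≤ (c ^ a - j ^ a) * (c ^ b - j ^ b) := by
    intro j hj
    rw [hFc q] at hj
    obtain ⟨i, hi, rfl⟩ := Finset.mem_image.mp hj
    have hi' : (i : ℝ) < q := by exact_mod_cast Finset.mem_range.mp hi
    have h0i : (0 : ℝ) ≤ (i : ℝ) := Nat.cast_nonneg i
    have habs : |(i : ℝ) + 1 - ((q : ℝ) + 1) / 2| ≤ c := by
      rw [hc, abs_le]
      constructor <;> linarith
    exact mul_nonneg (sub_nonneg.mpr (even_pow_le hcpos habs ha))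
      (sub_nonneg.mpr (even_pow_le hcpos habs hb))
  have := Finset.sum_nonneg hterm
  linarith
end
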